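/- For any P in the open northern hemisphere S^{n+1}_{N,+} with P ≠ N, writing (θ, r) = Id^{-1}∘α_N∘Ψ_N(P) (so θ ∈ S^n, r > 0 and the point is rθ), the image under Id^{-1}∘α_N of H(P) ∩ S^{n+1}_{N,+} equals the half-space {x ∈ ℝ^{n+1} : x·θ ≤ r}. -/

import Mathlib

open scoped RealInnerProductSpace

noncomputable def northPole (n : ℕ) : EuclideanSpace ℝ (Fin (n+2)) :=
  EuclideanSpace.single (Fin.last (n+1)) (1 : ℝ)

noncomputable def sphBlowUp {n : ℕ} (P : EuclideanSpace ℝ (Fin (n+2))) :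
    EuclideanSpace ℝ (Fin (n+2)) :=
  (Real.sqrt (1 - ⟪northPole n, P⟫ ^ 2))⁻¹ •
    (northPole n - ⟪northPole n, P⟫ • P)

def hemi {n : ℕ} (P : EuclideanSpace ℝ (Fin (n+2))) :
    Set (EuclideanSpace ℝ (Fin (n+2))) :=
  {Q | Q ∈ Metric.sphere (0 : EuclideanSpace ℝ (Fin (n+2))) 1 ∧ 0 ≤ ⟪P, Q⟫}

/-- `Id⁻¹ ∘ α_N` : central projection followed by dropping the last coordinate. -/
noncomputable def centProj {n : ℕ} (Q : EuclideanSpace ℝ (Fin (n+2))) :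
    EuclideanSpace ℝ (Fin (n+1)) :=
  WithLp.toLp 2 (fun i => Q i.castSucc / Q (Fin.last (n+1)))

/-!
Write `P = (p, c)` with `c = ⟪N, P⟫ ∈ (0, 1)`, so that `‖p‖² = 1 - c²`. If `Q` has positive
last coordinate and `x = α_N(Q)`, then `⟪P, Q⟫ = Q_last · (⟪x, p⟫ + c)`; hence the image of
`H(P) ∩ S_{N,+}` is the half-space `⟪x, p⟫ + c ≥ 0`, each `x` being attained by normalising
`(x, 1)`. On the other side `Ψ_N(P)` is a positive multiple of `N - cP = (-c p, 1 - c²)`, so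
`v = α_N(Ψ_N(P)) = -t p` with `t = c / (1 - c²)`, and `⟪x, v / ‖v‖⟫ ≤ ‖v‖`, i.e.
`⟪x, v⟫ ≤ ‖v‖² = t c`, is again `-⟪x, p⟫ ≤ c`.
-/

namespace EuclideanSpace

variable {m : ℕ}

def headCoords (Q : EuclideanSpace ℝ (Fin (m+1))) : EuclideanSpace ℝ (Fin m) :=
  WithLp.toLp 2 (fun i => Q i.castSucc)

@[simp]
lemma headCoords_apply (Q : EuclideanSpace ℝ (Fin (m+1))) (i : Fin m) :
    headCoords Q i = Q i.castSucc := rfl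

lemma inner_eq_inner_headCoords_add (P Q : EuclideanSpace ℝ (Fin (m+1))) :
    ⟪P, Q⟫ = ⟪headCoords P, headCoords Q⟫ + P (Fin.last m) * Q (Fin.last m) := by
  simp only [PiLp.inner_apply, Fin.sum_univ_castSucc, headCoords_apply, RCLike.inner_apply,
    conj_trivial]
  ring

lemma norm_headCoords_sq (P : EuclideanSpace ℝ (Fin (m+1))) :
    ‖headCoords P‖ ^ 2 = ‖P‖ ^ 2 - P (Fin.last m) ^ 2 := by
  rw [← real_inner_self_eq_norm_sq, ← real_inner_self_eq_norm_sq,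
    inner_eq_inner_headCoords_add P P]
  ring

def snocOne (x : EuclideanSpace ℝ (Fin m)) : EuclideanSpace ℝ (Fin (m+1)) :=
  WithLp.toLp 2 (Fin.snoc (x : Fin m → ℝ) 1)

@[simp]
lemma snocOne_last (x : EuclideanSpace ℝ (Fin m)) : snocOne x (Fin.last m) = 1 := by
  simp [snocOne]

@[simp]
lemma headCoords_snocOne (x : EuclideanSpace ℝ (Fin m)) : headCoords (snocOne x) = x := by
  ext i; simp [snocOne]

end EuclideanSpace

open EuclideanSpace

lemma inner_northPole_left {n : ℕ} (Q : EuclideanSpace ℝ (Fin (n+2))) :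
    ⟪northPole n, Q⟫ = Q (Fin.last (n+1)) := by
  simp [northPole, EuclideanSpace.inner_single_left]

lemma centProj_eq_smul_headCoords {n : ℕ} (Q : EuclideanSpace ℝ (Fin (n+2))) :
    centProj Q = (Q (Fin.last (n+1)))⁻¹ • headCoords Q := by
  ext i; simp [centProj, div_eq_inv_mul]

lemma centProj_smul {n : ℕ} {a : ℝ} (ha : a ≠ 0) (Q : EuclideanSpace ℝ (Fin (n+2))) :
    centProj (a • Q) = centProj Q := by
  ext i; simp [centProj, mul_div_mul_left _ _ ha]

@[simp]
lemma centProj_snocOne {n : ℕ} (x : EuclideanSpace ℝ (Fin (n+1))) : centProj (snocOne x) = x := by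
  simp [centProj_eq_smul_headCoords]

lemma centProj_sphBlowUp {n : ℕ} (P : EuclideanSpace ℝ (Fin (n+2)))
    (hP : ⟪northPole n, P⟫ ^ 2 < 1) :
    centProj (sphBlowUp P) =
      -(⟪northPole n, P⟫ / (1 - ⟪northPole n, P⟫ ^ 2)) • headCoords P := by
  have hs : Real.sqrt (1 - ⟪northPole n, P⟫ ^ 2) ≠ 0 := (Real.sqrt_pos.2 (by linarith)).ne'
  rw [sphBlowUp, centProj_smul (inv_ne_zero hs), centProj_eq_smul_headCoords]
  ext i
  simp [northPole, (Fin.castSucc_lt_last i).ne, ← inner_northPole_left]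
  ring

lemma inner_eq_mul_inner_centProj_add {n : ℕ} (P Q : EuclideanSpace ℝ (Fin (n+2)))
    (hQ : Q (Fin.last (n+1)) ≠ 0) :
    ⟪P, Q⟫ = Q (Fin.last (n+1)) * (⟪centProj Q, headCoords P⟫ + P (Fin.last (n+1))) := by
  rw [centProj_eq_smul_headCoords, real_inner_smul_left, inner_eq_inner_headCoords_add,
    real_inner_comm]
  field_simp

lemma image_centProj_hemi_inter {n : ℕ} (P : EuclideanSpace ℝ (Fin (n+2))) :
    centProj '' (hemi P ∩ {Q | 0 < ⟪northPole n, Q⟫}) =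
      {x | 0 ≤ ⟪x, headCoords P⟫ + P (Fin.last (n+1))} := by
  ext x
  constructor
  · rintro ⟨Q, ⟨⟨-, hPQ⟩, hQ : 0 < ⟪northPole n, Q⟫⟩, rfl⟩
    rw [inner_northPole_left] at hQ
    rw [inner_eq_mul_inner_centProj_add P Q hQ.ne'] at hPQ
    exact (mul_nonneg_iff_of_pos_left hQ).1 hPQ
  · intro hx
    have hW : snocOne x ≠ 0 := fun h => by simpa [h] using snocOne_last x
    have hW' : 0 < ‖snocOne x‖⁻¹ := inv_pos.2 (norm_pos_iff.2 hW)
    refine ⟨‖snocOne x‖⁻¹ • snocOne x, ⟨⟨?_, ?_⟩, ?_⟩, ?_⟩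
    · rw [mem_sphere_zero_iff_norm, norm_smul, norm_inv, norm_norm,
        inv_mul_cancel₀ (norm_ne_zero_iff.2 hW)]
    · rw [real_inner_smul_right, inner_eq_mul_inner_centProj_add P _ (by simp), snocOne_last,
        centProj_snocOne, one_mul]
      exact mul_nonneg hW'.le hx
    · simpa [inner_northPole_left] using hW'
    · rw [centProj_smul hW'.ne', centProj_snocOne]

lemma inner_normalize_le_norm_iff {E : Type*} [NormedAddCommGroup E] [InnerProductSpace ℝ E]
    {v : E} (hv : v ≠ 0) (x : E) : ⟪x, ‖v‖⁻¹ • v⟫ ≤ ‖v‖ ↔ ⟪x, v⟫ ≤ ‖v‖ ^ 2 := by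
  have hv' : 0 < ‖v‖ := norm_pos_iff.2 hv
  rw [real_inner_smul_right, inv_mul_le_iff₀ hv', sq]

lemma inner_normalize_centProj_sphBlowUp_le_iff {n : ℕ} (P : EuclideanSpace ℝ (Fin (n+2)))
    (hP : ‖P‖ = 1) (hc₀ : 0 < ⟪northPole n, P⟫) (hc₁ : ⟪northPole n, P⟫ < 1)
    (x : EuclideanSpace ℝ (Fin (n+1))) :
    ⟪x, ‖centProj (sphBlowUp P)‖⁻¹ • centProj (sphBlowUp P)⟫ ≤ ‖centProj (sphBlowUp P)‖ ↔
      0 ≤ ⟪x, headCoords P⟫ + P (Fin.last (n+1)) := by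
  rw [centProj_sphBlowUp P (by nlinarith), ← inner_northPole_left]
  set c := ⟪northPole n, P⟫
  set t := c / (1 - c ^ 2)
  have hs : 0 < 1 - c ^ 2 := by nlinarith
  have ht : 0 < t := div_pos hc₀ hs
  have hp : ‖headCoords P‖ ^ 2 = 1 - c ^ 2 := by
    rw [norm_headCoords_sq, hP, ← inner_northPole_left, one_pow]
  have htp : t * ‖headCoords P‖ ^ 2 = c := by rw [hp, div_mul_cancel₀ _ hs.ne']
  have hp₀ : headCoords P ≠ 0 := by
    rintro h
    rw [h, norm_zero] at hp
    nlinarith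
  have hv : -t • headCoords P ≠ 0 := smul_ne_zero (neg_ne_zero.2 ht.ne') hp₀
  rw [inner_normalize_le_norm_iff hv, real_inner_smul_right, norm_smul, mul_pow, norm_neg,
    Real.norm_eq_abs, sq_abs, sq t, mul_assoc, htp, neg_mul, neg_le, ← mul_neg,
    mul_le_mul_iff_of_pos_left ht]
  exact neg_le_iff_add_nonneg

/-- For `P` in the punctured open northern hemisphere, writing
`(θ, r)` for the polar coordinates of `Id⁻¹∘α_N∘Ψ_N(P)`, the image under
`Id⁻¹∘α_N` of `H(P) ∩ S^{n+1}_{N,+}` is the half-space `{x : x·θ ≤ r}`. -/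
theorem stmt_15 {n : ℕ} (P : EuclideanSpace ℝ (Fin (n+2)))
    (hP : P ∈ Metric.sphere (0 : EuclideanSpace ℝ (Fin (n+2))) 1)
    (hN : 0 < ⟪northPole n, P⟫) (hne : P ≠ northPole n) :
    centProj '' (hemi P ∩ {Q | 0 < ⟪northPole n, Q⟫}) =
      {x : EuclideanSpace ℝ (Fin (n+1)) |
        ⟪x, ‖centProj (sphBlowUp P)‖⁻¹ • centProj (sphBlowUp P)⟫ ≤
          ‖centProj (sphBlowUp P)‖} := by
  have hP₁ : ‖P‖ = 1 := by simpa using hP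
  have hN₁ : ⟪northPole n, P⟫ < 1 :=
    (inner_lt_one_iff_real_of_norm_eq_one (by simp [northPole]) hP₁).2 (Ne.symm hne)
  rw [image_centProj_hemi_inter]
  ext x
  exact (inner_normalize_centProj_sphBlowUp_le_iff P hP₁ hN hN₁ x).symm
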